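/- arXiv:1612.00936 — 3 statements merged into one kernel-verified Lean document; each statement's English description precedes it below -/
import Mathlib

section
/- Let G be a connected simple graph on n vertices (n ≥ 2) with Laplacian matrix L and second-smallest Laplacian eigenvalue λ₂(L) > 0, and let B be a k×k real symmetric positive semidefinite matrix. Let y ∈ ℝ^{nk} be written in n blocks y₁, …, y_n ∈ ℝ^k and suppose Σ_{i=1}^n y_i = 0 (i.e., (1_nᵀ ⊗ I_k) y = 0). Then yᵀ (L ⊗ B) y ≥ λ₂(L) · Σ_{i=1}^n y_iᵀ B y_i, where L ⊗ B denotes the Kronecker product. -/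
/-!
Factor `B = Cᵀ C` and let `X` be the `n × k` matrix whose `i`-th row is `C yᵢ`. Both sides of the
inequality split over the columns `x_c` of `X`: `yᵀ (L ⊗ B) y = ∑_c x_cᵀ L x_c` and
`∑ᵢ yᵢᵀ B yᵢ = ∑_c x_cᵀ x_c`, and every column sums to zero. This reduces the claim to Fiedler's
bound `λ₂ zᵀz ≤ zᵀ L z` for `z ⊥ 1`. Expand `z` in an orthonormal eigenbasis of `L`: since `G` is
connected, every null vector of `L` is constant, hence orthogonal to `z`, so `z` only has components
along eigenvectors whose eigenvalue exceeds the smallest one, `0`, and all of these are at least `λ₂`.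
-/

open Matrix
open scoped Kronecker

namespace Tuple

theorem apply_sort_one_le_of_lt {α : Type*} [LinearOrder α] {n : ℕ} (h1 : 1 < n) (f : Fin n → α)
    {i j : Fin n} (hji : f j < f i) : f (sort f ⟨1, h1⟩) ≤ f i := by
  set σ := sort f
  have hmono : Monotone (f ∘ σ) := monotone_sort f
  have hpos : (⟨1, h1⟩ : Fin n) ≤ σ.symm i := by
    by_contra! h
    have h0 : σ.symm i ≤ σ.symm j := Fin.le_def.mpr (by have : (σ.symm i : ℕ) < 1 := h; omega)
    exact hji.not_ge (by simpa using hmono h0)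
  simpa using hmono hpos

end Tuple

theorem OrthonormalBasis.sum_dotProduct_mul_dotProduct {ι : Type*} [Fintype ι]
    (b : OrthonormalBasis ι ℝ (EuclideanSpace ℝ ι)) (x y : ι → ℝ) :
    ∑ i, (b i ⬝ᵥ x) * (b i ⬝ᵥ y) = x ⬝ᵥ y := by
  simpa [EuclideanSpace.inner_toLp_toLp, EuclideanSpace.inner_eq_star_dotProduct, dotProduct_comm]
    using b.sum_inner_mul_inner (WithLp.toLp 2 x) (WithLp.toLp 2 y)

namespace Matrix

section Kronecker

variable {R l m n p : Type*} [CommSemiring R] [Fintype l] [Fintype m] [Fintype n] [Fintype p]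

theorem dotProduct_kronecker_mulVec (A : Matrix l m R) (B : Matrix n p R) (x : l × n → R)
    (y : m × p → R) :
    x ⬝ᵥ (A ⊗ₖ B) *ᵥ y =
      ∑ i, ∑ j, A i j * ((fun a => x (i, a)) ⬝ᵥ B *ᵥ fun b => y (j, b)) := by
  simp only [dotProduct, mulVec, kroneckerMap_apply, Fintype.sum_prod_type, Finset.mul_sum]
  refine Finset.sum_congr rfl fun i _ => ?_
  rw [Finset.sum_comm]
  exact Finset.sum_congr rfl fun j _ => Finset.sum_congr rfl fun a _ =>
    Finset.sum_congr rfl fun b _ => by ring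

theorem sum_sum_mul_dotProduct (A : Matrix l m R) (X : Matrix l n R) (Y : Matrix m n R) :
    ∑ i, ∑ j, A i j * (X i ⬝ᵥ Y j) = ∑ c, Xᵀ c ⬝ᵥ A *ᵥ Yᵀ c := by
  calc ∑ i, ∑ j, A i j * (X i ⬝ᵥ Y j) = ∑ i, ∑ j, ∑ c, X i c * (A i j * Y j c) := by
        simp only [dotProduct, Finset.mul_sum, mul_left_comm]
    _ = ∑ c, ∑ i, ∑ j, X i c * (A i j * Y j c) := by
        simp only [Finset.sum_comm (γ := n)]
    _ = ∑ c, Xᵀ c ⬝ᵥ A *ᵥ Yᵀ c := by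
        simp only [dotProduct, mulVec, transpose_apply, Finset.mul_sum]

theorem dotProduct_transpose_mul_mulVec (C : Matrix m n R) (x y : n → R) :
    x ⬝ᵥ (Cᵀ * C) *ᵥ y = C *ᵥ x ⬝ᵥ C *ᵥ y := by
  rw [← mulVec_mulVec, dotProduct_mulVec, vecMul_transpose]

end Kronecker

namespace IsHermitian

variable {ι : Type*} [Fintype ι] [DecidableEq ι] {A : Matrix ι ι ℝ}

theorem dotProduct_mulVec_eq_sum_eigenvalues_mul_sq (hA : A.IsHermitian) (z : ι → ℝ) :
    z ⬝ᵥ A *ᵥ z = ∑ i, hA.eigenvalues i * (hA.eigenvectorBasis i ⬝ᵥ z) ^ 2 := by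
  rw [← hA.eigenvectorBasis.sum_dotProduct_mul_dotProduct]
  refine Finset.sum_congr rfl fun i _ => ?_
  rw [dotProduct_mulVec, ← mulVec_transpose, (isHermitian_iff_isSymm.mp hA).eq,
    hA.mulVec_eigenvectorBasis, smul_dotProduct, smul_eq_mul]
  ring

theorem mul_dotProduct_self_le_dotProduct_mulVec (hA : A.IsHermitian) {μ : ℝ} {z : ι → ℝ}
    (hμ : ∀ i, hA.eigenvectorBasis i ⬝ᵥ z ≠ 0 → μ ≤ hA.eigenvalues i) :
    μ * (z ⬝ᵥ z) ≤ z ⬝ᵥ A *ᵥ z := by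
  rw [← hA.eigenvectorBasis.sum_dotProduct_mul_dotProduct,
    hA.dotProduct_mulVec_eq_sum_eigenvalues_mul_sq, Finset.mul_sum]
  refine Finset.sum_le_sum fun i _ => ?_
  by_cases hi : hA.eigenvectorBasis i ⬝ᵥ z = 0
  · simp [hi]
  · rw [← sq]
    exact mul_le_mul_of_nonneg_right (hμ i hi) (sq_nonneg _)

theorem exists_eigenvalues_eq_zero_of_det_eq_zero (hA : A.IsHermitian) (hdet : A.det = 0) :
    ∃ i, hA.eigenvalues i = 0 := by
  rw [hA.det_eq_prod_eigenvalues, Finset.prod_eq_zero_iff] at hdet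
  obtain ⟨i, -, hi⟩ := hdet
  exact ⟨i, by exact_mod_cast hi⟩

end IsHermitian

end Matrix

namespace SimpleGraph.Connected

theorem eigenvalues_lapMatrix_pos_of_dotProduct_ne_zero {V : Type*} [Fintype V] [DecidableEq V]
    {G : SimpleGraph V} [DecidableRel G.Adj] (hG : G.Connected)
    (hL : (G.lapMatrix ℝ).IsHermitian) {z : V → ℝ} (hz : ∑ v, z v = 0) {i : V}
    (hi : hL.eigenvectorBasis i ⬝ᵥ z ≠ 0) : 0 < hL.eigenvalues i := by
  refine ((posSemidef_lapMatrix ℝ G).eigenvalues_nonneg i).lt_of_ne' fun h0 => hi ?_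
  have hker : G.lapMatrix ℝ *ᵥ hL.eigenvectorBasis i = 0 := by
    rw [hL.mulVec_eigenvectorBasis, h0, zero_smul]
  have hconst := (lapMatrix_mulVec_eq_zero_iff_forall_reachable G).mp hker
  obtain ⟨v₀⟩ := hG.nonempty
  calc hL.eigenvectorBasis i ⬝ᵥ z = hL.eigenvectorBasis i v₀ * ∑ v, z v := by
        rw [dotProduct, Finset.mul_sum]
        exact Finset.sum_congr rfl fun v _ => by rw [hconst v v₀ (hG.preconnected v v₀)]
    _ = 0 := by rw [hz, mul_zero]

theorem mul_dotProduct_self_le_dotProduct_lapMatrix_mulVec {n : ℕ} (hn : 1 < n)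
    {G : SimpleGraph (Fin n)} [DecidableRel G.Adj] (hG : G.Connected)
    (hL : (G.lapMatrix ℝ).IsHermitian) {z : Fin n → ℝ} (hz : ∑ i, z i = 0) :
    (hL.eigenvalues ∘ Tuple.sort hL.eigenvalues) ⟨1, hn⟩ * (z ⬝ᵥ z) ≤
      z ⬝ᵥ G.lapMatrix ℝ *ᵥ z := by
  have : Nonempty (Fin n) := ⟨⟨0, by omega⟩⟩
  obtain ⟨j, hj⟩ := hL.exists_eigenvalues_eq_zero_of_det_eq_zero (det_lapMatrix_eq_zero G)
  exact hL.mul_dotProduct_self_le_dotProduct_mulVec fun i hi =>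
    Tuple.apply_sort_one_le_of_lt hn _
      (hj ▸ hG.eigenvalues_lapMatrix_pos_of_dotProduct_ne_zero hL hz hi)

end SimpleGraph.Connected

/-- For a connected simple graph `G` on `n ≥ 2` vertices with Laplacian `L` and
second-smallest eigenvalue `λ₂(L)`, and a `k×k` real symmetric positive semidefinite
matrix `B`: for `y ∈ ℝ^{nk}` with blocks `y₁,…,yₙ ∈ ℝᵏ` summing to zero,
`yᵀ (L ⊗ B) y ≥ λ₂(L) · Σᵢ yᵢᵀ B yᵢ`. -/
theorem laplacian_kronecker_quadratic_lower_bound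
    (n k : ℕ) (hn : 2 ≤ n) (G : SimpleGraph (Fin n)) [DecidableRel G.Adj]
    (hG : G.Connected)
    (hL : (G.lapMatrix ℝ).IsHermitian)
    (B : Matrix (Fin k) (Fin k) ℝ) (hB : B.PosSemidef)
    (y : Fin n × Fin k → ℝ) (hy : ∀ a : Fin k, ∑ i : Fin n, y (i, a) = 0) :
    (hL.eigenvalues ∘ Tuple.sort hL.eigenvalues) ⟨1, by omega⟩ *
        ∑ i : Fin n, (fun a => y (i, a)) ⬝ᵥ B.mulVec (fun a => y (i, a)) ≤
      y ⬝ᵥ ((G.lapMatrix ℝ) ⊗ₖ B).mulVec y := by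
  obtain ⟨C, rfl⟩ : ∃ C : Matrix (Fin k) (Fin k) ℝ, B = Cᵀ * C := by
    open scoped MatrixOrder in
    simpa [star_eq_conjTranspose, conjTranspose_eq_transpose_of_trivial] using
      CStarAlgebra.nonneg_iff_eq_star_mul_self.mp hB.nonneg
  set X : Matrix (Fin n) (Fin k) ℝ := fun i => C *ᵥ fun a => y (i, a)
  have hX : ∀ c, ∑ i, Xᵀ c i = 0 := fun c => by
    have hsum : ∑ i, (fun a => y (i, a)) = 0 := funext fun a => by simpa using hy a
    change ∑ i, (C *ᵥ fun a => y (i, a)) c = 0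
    rw [← Finset.sum_apply, ← mulVec_sum, hsum, mulVec_zero, Pi.zero_apply]
  have hdiag : ∑ i, (fun a => y (i, a)) ⬝ᵥ (Cᵀ * C) *ᵥ (fun a => y (i, a)) =
      ∑ c, Xᵀ c ⬝ᵥ Xᵀ c := by
    simp only [dotProduct_transpose_mul_mulVec]
    simp only [dotProduct, X]
    exact Finset.sum_comm
  have hquad : y ⬝ᵥ (G.lapMatrix ℝ ⊗ₖ (Cᵀ * C)) *ᵥ y = ∑ c, Xᵀ c ⬝ᵥ G.lapMatrix ℝ *ᵥ Xᵀ c := by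
    rw [dotProduct_kronecker_mulVec, ← sum_sum_mul_dotProduct]
    simp only [dotProduct_transpose_mul_mulVec, X]
  rw [hdiag, hquad, Finset.mul_sum]
  exact Finset.sum_le_sum fun c _ =>
    hG.mul_dotProduct_self_le_dotProduct_lapMatrix_mulVec (by omega) hL (hX c)
end

section
/- Let c > 0 and let V : [0,∞) → ℝ be differentiable with V(t) ≥ 0 and V'(t) ≤ −c √(V(t)) for all t ≥ 0. Then V(t) = 0 for all t ≥ 2√(V(0))/c. -/
/-- Finite-time convergence comparison lemma: if `V ≥ 0` is differentiable with
`V' ≤ −c √V` on `[0,∞)` for some `c > 0`, then `V(t) = 0` for all `t ≥ 2√(V(0))/c`. -/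
theorem sqrt_comparison_finite_time_convergence
    (c : ℝ) (hc : 0 < c)
    (V : ℝ → ℝ) (hV : Differentiable ℝ V)
    (hVnonneg : ∀ t : ℝ, 0 ≤ t → 0 ≤ V t)
    (hV' : ∀ t : ℝ, 0 ≤ t → deriv V t ≤ -c * Real.sqrt (V t)) :
    ∀ t : ℝ, 2 * Real.sqrt (V 0) / c ≤ t → V t = 0 := by
  intro t ht
  have hs0 : 0 ≤ Real.sqrt (V 0) := Real.sqrt_nonneg _
  have ht0 : 0 ≤ t := le_trans (by positivity) ht
  -- V is antitone on [0,∞)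
  have hanti : AntitoneOn V (Set.Ici 0) := by
    apply antitoneOn_of_deriv_nonpos (convex_Ici 0) hV.continuous.continuousOn
      hV.differentiableOn
    intro x hx
    rw [interior_Ici] at hx
    have hx0 : (0:ℝ) ≤ x := le_of_lt hx
    have := hV' x hx0
    have : deriv V x ≤ -c * Real.sqrt (V x) := this
    nlinarith [Real.sqrt_nonneg (V x), hc.le]
  by_contra hne
  have hVt : 0 < V t := lt_of_le_of_ne (hVnonneg t ht0) (Ne.symm hne)
  -- V > 0 on [0, t]
  have hpos : ∀ s ∈ Set.Icc (0:ℝ) t, 0 < V s := by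
    intro s hs
    exact lt_of_lt_of_le hVt (hanti (Set.mem_Ici.2 hs.1) (Set.mem_Ici.2 ht0) hs.2)
  -- g s = sqrt (V s) + c/2 * s is antitone on [0, t]
  set g : ℝ → ℝ := fun s => Real.sqrt (V s) + c / 2 * s with hg
  have hganti : AntitoneOn g (Set.Icc 0 t) := by
    apply antitoneOn_of_deriv_nonpos (convex_Icc 0 t)
    · exact ((Real.continuous_sqrt.comp hV.continuous).add
        (continuous_const.mul continuous_id)).continuousOn
    · intro x hx
      rw [interior_Icc] at hx
      have hVx : 0 < V x := hpos x ⟨hx.1.le, hx.2.le⟩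
      have h1 : HasDerivAt (fun s => Real.sqrt (V s))
          (1 / (2 * Real.sqrt (V x)) * deriv V x) x :=
        (Real.hasDerivAt_sqrt (ne_of_gt hVx)).comp x (hV x).hasDerivAt
      exact (h1.add ((hasDerivAt_id x).const_mul (c / 2))).differentiableAt.differentiableWithinAt
    · intro x hx
      rw [interior_Icc] at hx
      have hVx : 0 < V x := hpos x ⟨hx.1.le, hx.2.le⟩
      have hsx : 0 < Real.sqrt (V x) := Real.sqrt_pos.2 hVx
      have h1 : HasDerivAt (fun s => Real.sqrt (V s))
          (1 / (2 * Real.sqrt (V x)) * deriv V x) x :=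
        (Real.hasDerivAt_sqrt (ne_of_gt hVx)).comp x (hV x).hasDerivAt
      have h2 : HasDerivAt g (1 / (2 * Real.sqrt (V x)) * deriv V x + c / 2 * 1) x :=
        h1.add ((hasDerivAt_id x).const_mul (c / 2))
      rw [h2.deriv]
      have hd := hV' x hx.1.le
      have key : 1 / (2 * Real.sqrt (V x)) * deriv V x ≤ -(c / 2) := by
        have h3 : 1 / (2 * Real.sqrt (V x)) * deriv V x ≤
            1 / (2 * Real.sqrt (V x)) * (-c * Real.sqrt (V x)) := by
          apply mul_le_mul_of_nonneg_left hd
          positivity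
        have h4 : 1 / (2 * Real.sqrt (V x)) * (-c * Real.sqrt (V x)) = -(c / 2) := by
          field_simp
        linarith
      linarith
  have hgt : g t ≤ g 0 := hganti (Set.left_mem_Icc.2 ht0) (Set.right_mem_Icc.2 ht0) ht0
  have hst : 0 < Real.sqrt (V t) := Real.sqrt_pos.2 hVt
  have hct : Real.sqrt (V 0) ≤ c * t / 2 := by
    rw [div_le_iff₀ hc] at ht
    linarith
  simp only [hg, mul_zero, add_zero] at hgt
  linarith
end

section
/- Let η > 0, p ≥ 1, and let x : [0,∞) → ℝ^p be differentiable with each component satisfying x_k'(t) = −η · sgn(x_k(t)) for all t ≥ 0, where sgn is the signum function with sgn(0) = 0. Then x(t) = 0 for all t ≥ max_k |x_k(0)| / η; in particular x(t) → 0 as t → ∞. -/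
/-!
Along a solution of `f' = -η sgn f` the square `f²` has derivative `-2η |f|`, so it never
increases: once `f` vanishes it stays zero. While it does not vanish, `|f|` decreases at
exactly the rate `η`, so it cannot stay nonzero beyond time `|f 0| / η`.
-/

open Filter Set

def IsSignumTrajectory (η : ℝ) (f : ℝ → ℝ) : Prop :=
  ∀ t, 0 ≤ t → HasDerivAt f (-η * Real.sign (f t)) t

namespace IsSignumTrajectory

variable {η : ℝ} {f : ℝ → ℝ}

theorem of_deriv (hf : Differentiable ℝ f)
    (hode : ∀ t, 0 ≤ t → deriv f t = -η * Real.sign (f t)) : IsSignumTrajectory η f :=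
  fun t ht => hode t ht ▸ (hf t).hasDerivAt

theorem continuousOn (hf : IsSignumTrajectory η f) : ContinuousOn f (Ici 0) :=
  fun t ht => (hf t ht).continuousAt.continuousWithinAt

theorem sq_antitoneOn (hη : 0 ≤ η) (hf : IsSignumTrajectory η f) :
    AntitoneOn (fun t => f t ^ 2) (Ici 0) := by
  refine antitoneOn_of_hasDerivWithinAt_nonpos (f' := fun t => -2 * η * (Real.sign (f t) * f t))
    (convex_Ici 0) (hf.continuousOn.pow 2) (fun t ht => ?_) (fun t _ => ?_)
  · exact (((hf t (interior_subset ht)).pow 2).congr_deriv (by push_cast; ring)).hasDerivWithinAt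
  · nlinarith [Real.sign_mul_nonneg (f t)]

theorem eq_zero_of_le (hη : 0 ≤ η) (hf : IsSignumTrajectory η f) {t₀ t : ℝ} (ht₀ : 0 ≤ t₀)
    (hft₀ : f t₀ = 0) (ht : t₀ ≤ t) : f t = 0 := by
  have hsq : f t ^ 2 ≤ 0 := by simpa [hft₀] using hf.sq_antitoneOn hη ht₀ (ht₀.trans ht) ht
  exact pow_eq_zero_iff two_ne_zero |>.mp (le_antisymm hsq (sq_nonneg _))

theorem hasDerivAt_abs (hf : IsSignumTrajectory η f) {t : ℝ} (ht : 0 ≤ t) (hft : f t ≠ 0) :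
    HasDerivAt (fun s => |f s|) (-η) t := by
  rcases hft.lt_or_gt with hneg | hpos
  · have := (hasDerivAt_abs_neg hneg).comp t (hf t ht)
    rw [Real.sign_of_neg hneg] at this
    exact this.congr_deriv (by ring)
  · have := (hasDerivAt_abs_pos hpos).comp t (hf t ht)
    rw [Real.sign_of_pos hpos] at this
    exact this.congr_deriv (by ring)

theorem abs_add_mul_eq (hf : IsSignumTrajectory η f) {t : ℝ} (ht : 0 ≤ t)
    (hne : ∀ s ∈ Icc 0 t, f s ≠ 0) : |f t| + η * t = |f 0| := by
  have hconst := constant_of_has_deriv_right_zero (f := fun s => |f s| + η * s) (a := 0) (b := t)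
    ((continuous_abs.comp_continuousOn (hf.continuousOn.mono Icc_subset_Ici_self)).add
      (continuousOn_const.mul continuousOn_id))
    (fun s hs => by
      have := ((hf.hasDerivAt_abs hs.1 (hne s (Ico_subset_Icc_self hs))).add
        ((hasDerivAt_id s).const_mul η))
      exact (this.congr_deriv (by ring)).hasDerivWithinAt)
  simpa using hconst t ⟨ht, le_rfl⟩

theorem eq_zero_of_abs_div_le (hη : 0 < η) (hf : IsSignumTrajectory η f) {t : ℝ}
    (ht : |f 0| / η ≤ t) : f t = 0 := by
  have ht₀ : 0 ≤ t := (div_nonneg (abs_nonneg _) hη.le).trans ht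
  by_contra hft
  have hne : ∀ s ∈ Icc 0 t, f s ≠ 0 := fun s hs hfs => hft (hf.eq_zero_of_le hη.le hs.1 hfs hs.2)
  have hdecay := hf.abs_add_mul_eq ht₀ hne
  have hreach : |f 0| ≤ η * t := (div_le_iff₀' hη).mp ht
  have hpos : 0 < |f t| := abs_pos.mpr hft
  linarith

end IsSignumTrajectory

theorem single_integrator_signum_finite_time_general
    (p : ℕ) (η : ℝ) (hη : 0 < η)
    (x : ℝ → (Fin p → ℝ)) (hx : Differentiable ℝ x)
    (hode : ∀ t : ℝ, 0 ≤ t → ∀ k, deriv (fun s => x s k) t = -η * Real.sign (x t k)) :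
    (∀ t : ℝ, (∀ k, |x 0 k| / η ≤ t) → x t = 0) ∧
    Tendsto x atTop (nhds 0) := by
  have hcomp (k : Fin p) : IsSignumTrajectory η (fun s => x s k) :=
    .of_deriv (differentiable_pi.mp hx k) (fun t ht => hode t ht k)
  have hzero (t : ℝ) (ht : ∀ k, |x 0 k| / η ≤ t) : x t = 0 :=
    funext fun k => (hcomp k).eq_zero_of_abs_div_le hη (ht k)
  refine ⟨hzero, tendsto_const_nhds.congr' ?_⟩
  filter_upwards [eventually_all.2 fun k => eventually_ge_atTop (|x 0 k| / η)] with t ht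
  exact (hzero t ht).symm

/-- Finite-time convergence of the single-integrator signum dynamics `x' = −η sgn(x)`
(componentwise): `x(t) = 0` for all `t ≥ maxₖ |xₖ(0)|/η`, and in particular `x(t) → 0`. -/
theorem single_integrator_signum_finite_time
    (p : ℕ) (hp : 1 ≤ p) (η : ℝ) (hη : 0 < η)
    (x : ℝ → (Fin p → ℝ)) (hx : Differentiable ℝ x)
    (hode : ∀ t : ℝ, 0 ≤ t → ∀ k, deriv (fun s => x s k) t = -η * Real.sign (x t k)) :
    (∀ t : ℝ, (∀ k, |x 0 k| / η ≤ t) → x t = 0) ∧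
    Tendsto x atTop (nhds 0) :=
  single_integrator_signum_finite_time_general p η hη x hx hode
end
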